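/- arXiv:2510.06981 — 2 statements merged into one kernel-verified Lean document; each statement's English description precedes it below -/
import Mathlib

section
/- Let 0 ≤ t < T, let {φ_j}_{j=0}^∞ be an arbitrary complete orthonormal system of L²([t,T],ℝ), and let ψ₁, ψ₂, ψ₃ : [t,T] → ℝ be continuous. Then for every fixed j₂ ∈ ℕ, lim_{p→∞} Σ_{j=0}^p C_{j j₂ j} = 0. -/
/-!
Swapping the two outer integrations (Fubini on the triangle `t ≤ t₂ ≤ t₃ ≤ T`) gives
`C j j₂ j = ∫ ψ₂ φ_{j₂}(u) ⟪1_{(t,u]} ψ₁, φ_j⟫ ⟪1_{(u,T]} ψ₃, φ_j⟫ du`.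
For each `u`, Parseval sends the sum over `j` of the last two factors to
`⟪1_{(t,u]} ψ₁, 1_{(u,T]} ψ₃⟫ = 0` (disjoint supports), while Bessel and Cauchy–Schwarz bound
its partial sums by `‖ψ₁‖₂ ‖ψ₃‖₂` uniformly in `u`; dominated convergence then lets the sum
pass under the integral.
-/

open MeasureTheory Filter Finset
open scoped RealInnerProductSpace Topology

theorem Orthonormal.abs_sum_inner_mul_inner_le {ι E : Type*} [NormedAddCommGroup E]
    [InnerProductSpace ℝ E] {v : ι → E} (hv : Orthonormal ℝ v) (s : Finset ι) (x y : E) :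
    |∑ i ∈ s, ⟪x, v i⟫ * ⟪v i, y⟫| ≤ ‖x‖ * ‖y‖ := by
  have hbessel : ∀ z : E, ∑ i ∈ s, ⟪v i, z⟫ ^ 2 ≤ ‖z‖ ^ 2 := fun z => by
    simpa only [Real.norm_eq_abs, sq_abs] using hv.sum_inner_products_le (s := s) (x := z)
  refine abs_le_of_sq_le_sq ?_ (by positivity)
  calc (∑ i ∈ s, ⟪x, v i⟫ * ⟪v i, y⟫) ^ 2
      ≤ (∑ i ∈ s, ⟪x, v i⟫ ^ 2) * ∑ i ∈ s, ⟪v i, y⟫ ^ 2 := sum_mul_sq_le_sq_mul_sq _ _ _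
    _ ≤ ‖x‖ ^ 2 * ‖y‖ ^ 2 := by
      simp_rw [real_inner_comm _ x]
      exact mul_le_mul (hbessel x) (hbessel y) (sum_nonneg fun _ _ => sq_nonneg _) (sq_nonneg _)
    _ = (‖x‖ * ‖y‖) ^ 2 := (mul_pow _ _ _).symm

section SquareIntegrable

variable {α ι : Type*} [MeasurableSpace α] {μ : Measure α}

theorem MeasureTheory.MemLp.inner_toLp {f g : α → ℝ} (hf : MemLp f 2 μ) (hg : MemLp g 2 μ) :
    ⟪hf.toLp f, hg.toLp g⟫ = ∫ x, f x * g x ∂μ := by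
  rw [L2.inner_def]
  refine integral_congr_ae ?_
  filter_upwards [hf.coeFn_toLp, hg.coeFn_toLp] with x hfx hgx
  simp [hfx, hgx, mul_comm]

variable {φ : ι → α → ℝ}

theorem orthonormal_toLp [DecidableEq ι] (hmem : ∀ j, MemLp (φ j) 2 μ)
    (hon : ∀ i j, ∫ x, φ i x * φ j x ∂μ = if i = j then 1 else 0) :
    Orthonormal ℝ fun j => (hmem j).toLp (φ j) := by
  rw [orthonormal_iff_ite]
  intro i j
  rw [MemLp.inner_toLp, hon]

theorem orthogonal_span_range_toLp_eq_bot (hmem : ∀ j, MemLp (φ j) 2 μ)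
    (hcomplete : ∀ f : α → ℝ, MemLp f 2 μ → (∀ j, ∫ x, f x * φ j x ∂μ = 0) → f =ᵐ[μ] 0) :
    (Submodule.span ℝ (Set.range fun j => (hmem j).toLp (φ j)))ᗮ = ⊥ := by
  refine (Submodule.eq_bot_iff _).2 fun F hF => Lp.eq_zero_iff_ae_eq_zero.2 ?_
  refine hcomplete F (Lp.memLp F) fun j => ?_
  have hFj : ⟪F, (hmem j).toLp (φ j)⟫ = 0 := by
    rw [real_inner_comm]
    exact (Submodule.mem_orthogonal _ F).1 hF _ (Submodule.subset_span ⟨j, rfl⟩)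
  rw [← (Lp.memLp F).inner_toLp (hmem j), ← hFj]
  congr 1
  exact Lp.toLp_coeFn F (Lp.memLp F)

variable [DecidableEq ι]

noncomputable def hilbertBasisOfComplete (hmem : ∀ j, MemLp (φ j) 2 μ)
    (hon : ∀ i j, ∫ x, φ i x * φ j x ∂μ = if i = j then 1 else 0)
    (hcomplete : ∀ f : α → ℝ, MemLp f 2 μ → (∀ j, ∫ x, f x * φ j x ∂μ = 0) → f =ᵐ[μ] 0) :
    HilbertBasis ι ℝ (Lp ℝ 2 μ) :=
  .mkOfOrthogonalEqBot (orthonormal_toLp hmem hon)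
    (orthogonal_span_range_toLp_eq_bot hmem hcomplete)

theorem hasSum_integral_mul_mul_integral_mul (hmem : ∀ j, MemLp (φ j) 2 μ)
    (hon : ∀ i j, ∫ x, φ i x * φ j x ∂μ = if i = j then 1 else 0)
    (hcomplete : ∀ f : α → ℝ, MemLp f 2 μ → (∀ j, ∫ x, f x * φ j x ∂μ = 0) → f =ᵐ[μ] 0)
    {f g : α → ℝ} (hf : MemLp f 2 μ) (hg : MemLp g 2 μ) :
    HasSum (fun j => (∫ x, f x * φ j x ∂μ) * ∫ x, g x * φ j x ∂μ) (∫ x, f x * g x ∂μ) := by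
  have h := (hilbertBasisOfComplete hmem hon hcomplete).hasSum_inner_mul_inner
    (hf.toLp f) (hg.toLp g)
  simp only [hilbertBasisOfComplete, HilbertBasis.coe_mkOfOrthogonalEqBot] at h
  simpa only [MemLp.inner_toLp, mul_comm (φ _ _)] using h

theorem abs_sum_integral_mul_mul_integral_mul_le (hmem : ∀ j, MemLp (φ j) 2 μ)
    (hon : ∀ i j, ∫ x, φ i x * φ j x ∂μ = if i = j then 1 else 0) (s : Finset ι)
    {f g : α → ℝ} (hf : MemLp f 2 μ) (hg : MemLp g 2 μ) :
    |∑ j ∈ s, (∫ x, f x * φ j x ∂μ) * ∫ x, g x * φ j x ∂μ|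
      ≤ (eLpNorm f 2 μ).toReal * (eLpNorm g 2 μ).toReal := by
  have h := (orthonormal_toLp hmem hon).abs_sum_inner_mul_inner_le s (hf.toLp f) (hg.toLp g)
  simpa only [MemLp.inner_toLp, mul_comm (φ _ _), Lp.norm_toLp] using h

end SquareIntegrable

theorem ContinuousOn.memLp_restrict_of_isCompact {X E : Type*} [TopologicalSpace X]
    [MeasurableSpace X] [OpensMeasurableSpace X] [T2Space X] {μ : Measure X}
    [IsFiniteMeasureOnCompacts μ] [NormedAddCommGroup E] {s : Set X} {f : X → E}
    (hs : IsCompact s) (hf : ContinuousOn f s) (p : ENNReal) : MemLp f p (μ.restrict s) := by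
  have : IsFiniteMeasure (μ.restrict s) := isFiniteMeasure_restrict.2 hs.measure_lt_top.ne
  obtain ⟨C, hC⟩ := hs.exists_bound_of_continuousOn hf
  exact .of_bound (hf.aestronglyMeasurable_of_isCompact hs hs.measurableSet) C
    ((ae_restrict_iff' hs.measurableSet).2 (ae_of_all _ hC))

theorem setIntegral_Icc_indicator_Ioc_mul {a b c d : ℝ} (hac : a ≤ c) (hcd : c ≤ d)
    (hdb : d ≤ b) (f g : ℝ → ℝ) :
    ∫ x in Set.Icc a b, (Set.Ioc c d).indicator f x * g x = ∫ x in c..d, f x * g x := by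
  simp_rw [← Set.indicator_mul_left]
  rw [integral_indicator measurableSet_Ioc, Measure.restrict_restrict measurableSet_Ioc,
    Set.inter_eq_self_of_subset_left (Set.Ioc_subset_Icc_self.trans (Set.Icc_subset_Icc hac hdb)),
    intervalIntegral.integral_of_le hcd]

theorem integral_mul_primitive_eq_integral_mul_tail {a b : ℝ} (hab : a ≤ b) {g h : ℝ → ℝ}
    (hg : IntervalIntegrable g volume a b) (hh : IntervalIntegrable h volume a b) :
    ∫ s in a..b, g s * ∫ u in a..s, h u = ∫ u in a..b, h u * ∫ s in u..b, g s := by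
  set ν := volume.restrict (Set.Ioc a b)
  set F : ℝ × ℝ → ℝ := {q : ℝ × ℝ | q.2 ≤ q.1}.indicator fun q => g q.1 * h q.2
  have hF : Integrable F (ν.prod ν) :=
    (hg.1.mul_prod hh.1).indicator (measurableSet_le measurable_snd measurable_fst)
  have hleft : ∀ s ∈ Set.Ioc a b, ∫ u, F (s, u) ∂ν = g s * ∫ u in a..s, h u := fun s hs => by
    have : (fun u => F (s, u)) = (Set.Iic s).indicator fun u => g s * h u := by
      ext u; by_cases hu : u ≤ s <;> simp [F, hu]
    rw [this, integral_indicator measurableSet_Iic, Measure.restrict_restrict measurableSet_Iic,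
      Set.Iic_inter_Ioc_of_le hs.2, intervalIntegral.integral_of_le hs.1.le, integral_const_mul]
  have hright : ∀ u ∈ Set.Ioc a b, ∫ s, F (s, u) ∂ν = h u * ∫ s in u..b, g s := fun u hu => by
    have : (fun s => F (s, u)) = (Set.Ici u).indicator fun s => g s * h u := by
      ext s; by_cases hs : u ≤ s <;> simp [F, hs]
    have hIcc : Set.Ici u ∩ Set.Ioc a b = Set.Icc u b :=
      Set.ext fun x => ⟨fun hx => ⟨hx.1, hx.2.2⟩, fun hx => ⟨hx.1, hu.1.trans_le hx.1, hx.2⟩⟩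
    rw [this, integral_indicator measurableSet_Ici, Measure.restrict_restrict measurableSet_Ici,
      hIcc, integral_Icc_eq_integral_Ioc, intervalIntegral.integral_of_le hu.2,
      integral_mul_const, mul_comm]
  rw [intervalIntegral.integral_of_le hab, intervalIntegral.integral_of_le hab,
    ← setIntegral_congr_fun measurableSet_Ioc hleft,
    ← setIntegral_congr_fun measurableSet_Ioc hright]
  exact integral_integral_swap hF

theorem integral_mul_primitive_mul_primitive {t T : ℝ} (htT : t ≤ T) {f₁ f₂ f₃ : ℝ → ℝ}
    (h₁ : IntegrableOn f₁ (Set.Icc t T)) (h₂ : IntegrableOn f₂ (Set.Icc t T))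
    (h₃ : IntegrableOn f₃ (Set.Icc t T)) :
    ∫ t₃ in t..T, f₃ t₃ * ∫ t₂ in t..t₃, f₂ t₂ * ∫ t₁ in t..t₂, f₁ t₁
      = ∫ u in Set.Icc t T, f₂ u * ((∫ x in t..u, f₁ x) * ∫ x in u..T, f₃ x) := by
  have hIcc : Set.uIcc t T = Set.Icc t T := Set.uIcc_of_le htT
  have hcont : ContinuousOn (fun u => ∫ x in t..u, f₁ x) (Set.Icc t T) :=
    hIcc ▸ intervalIntegral.continuousOn_primitive_interval (hIcc ▸ h₁)
  obtain ⟨K, hK⟩ := isCompact_Icc.exists_bound_of_continuousOn hcont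
  have h₂₁ : IntegrableOn (fun u => f₂ u * ∫ x in t..u, f₁ x) (Set.Icc t T) :=
    h₂.mul_bdd (hcont.aestronglyMeasurable measurableSet_Icc)
      (ae_restrict_of_forall_mem measurableSet_Icc hK)
  rw [integral_mul_primitive_eq_integral_mul_tail htT
      ((intervalIntegrable_iff_integrableOn_Icc_of_le htT).2 h₃)
      ((intervalIntegrable_iff_integrableOn_Icc_of_le htT).2 h₂₁),
    intervalIntegral.integral_of_le htT, ← integral_Icc_eq_integral_Ioc]
  simp only [mul_assoc]

theorem tendsto_sum_integral_mul_of_hasSum {α : Type*} [MeasurableSpace α] {μ : Measure α}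
    {w L : α → ℝ} {s : ℕ → α → ℝ} {M : ℝ} (hw : Integrable w μ)
    (hs : ∀ j, AEStronglyMeasurable (s j) μ)
    (hbound : ∀ n : Finset ℕ, ∀ᵐ x ∂μ, |∑ j ∈ n, s j x| ≤ M)
    (hsum : ∀ᵐ x ∂μ, HasSum (fun j => s j x) (L x)) :
    Tendsto (fun n => ∑ j ∈ range n, ∫ x, w x * s j x ∂μ) atTop (𝓝 (∫ x, w x * L x ∂μ)) := by
  have hint : ∀ j, Integrable (fun x => w x * s j x) μ := fun j =>
    hw.mul_bdd (hs j) (by simpa using hbound {j})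
  have hpartial : ∀ n, ∑ j ∈ range n, ∫ x, w x * s j x ∂μ
      = ∫ x, w x * ∑ j ∈ range n, s j x ∂μ := fun n => by
    simp_rw [mul_sum]
    exact (integral_finsetSum _ fun j _ => hint j).symm
  simp_rw [hpartial]
  refine tendsto_integral_of_dominated_convergence (fun x => |w x| * M)
    (fun n => hw.1.mul (Finset.aestronglyMeasurable_fun_sum _ fun j _ => hs j))
    (hw.abs.mul_const M) (fun n => ?_) ?_
  · filter_upwards [hbound (range n)] with x hx
    rw [norm_mul, Real.norm_eq_abs]
    exact mul_le_mul_of_nonneg_left hx (abs_nonneg _)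
  · filter_upwards [hsum] with x hx
    exact hx.tendsto_sum_nat.const_mul (w x)

section Interval

variable {ι : Type*} [DecidableEq ι] {t T u : ℝ} {φ : ι → ℝ → ℝ} {f g : ℝ → ℝ}

theorem hasSum_primitive_mul_tail (hmem : ∀ j, MemLp (φ j) 2 (volume.restrict (Set.Icc t T)))
    (hon : ∀ i j, ∫ x in Set.Icc t T, φ i x * φ j x = if i = j then 1 else 0)
    (hcomplete : ∀ f : ℝ → ℝ, MemLp f 2 (volume.restrict (Set.Icc t T)) →
      (∀ j, ∫ x in Set.Icc t T, f x * φ j x = 0) → f =ᵐ[volume.restrict (Set.Icc t T)] 0)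
    (hf : MemLp f 2 (volume.restrict (Set.Icc t T)))
    (hg : MemLp g 2 (volume.restrict (Set.Icc t T))) (hu : u ∈ Set.Icc t T) :
    HasSum (fun j => (∫ x in t..u, f x * φ j x) * ∫ x in u..T, g x * φ j x) 0 := by
  have hdisjoint : ∀ x, (Set.Ioc t u).indicator f x * (Set.Ioc u T).indicator g x = 0 := by
    intro x
    by_cases hx : x ≤ u <;> simp [hx]
  have h := hasSum_integral_mul_mul_integral_mul hmem hon hcomplete
    (hf.indicator (s := Set.Ioc t u) measurableSet_Ioc)
    (hg.indicator (s := Set.Ioc u T) measurableSet_Ioc)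
  simpa only [setIntegral_Icc_indicator_Ioc_mul le_rfl hu.1 hu.2,
    setIntegral_Icc_indicator_Ioc_mul hu.1 hu.2 le_rfl, hdisjoint, integral_zero] using h

theorem abs_sum_primitive_mul_tail_le
    (hmem : ∀ j, MemLp (φ j) 2 (volume.restrict (Set.Icc t T)))
    (hon : ∀ i j, ∫ x in Set.Icc t T, φ i x * φ j x = if i = j then 1 else 0)
    (hf : MemLp f 2 (volume.restrict (Set.Icc t T)))
    (hg : MemLp g 2 (volume.restrict (Set.Icc t T))) (hu : u ∈ Set.Icc t T) (s : Finset ι) :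
    |∑ j ∈ s, (∫ x in t..u, f x * φ j x) * ∫ x in u..T, g x * φ j x|
      ≤ (eLpNorm f 2 (volume.restrict (Set.Icc t T))).toReal
        * (eLpNorm g 2 (volume.restrict (Set.Icc t T))).toReal := by
  have h := abs_sum_integral_mul_mul_integral_mul_le hmem hon s
    (hf.indicator (s := Set.Ioc t u) measurableSet_Ioc)
    (hg.indicator (s := Set.Ioc u T) measurableSet_Ioc)
  simp only [setIntegral_Icc_indicator_Ioc_mul le_rfl hu.1 hu.2,
    setIntegral_Icc_indicator_Ioc_mul hu.1 hu.2 le_rfl] at h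
  refine h.trans (mul_le_mul ?_ ?_ ENNReal.toReal_nonneg ENNReal.toReal_nonneg) <;>
    exact ENNReal.toReal_mono (by exact MemLp.eLpNorm_ne_top ‹_›) (eLpNorm_indicator_le _)

end Interval

theorem stmt5_general
    (t T : ℝ) (htT : t < T)
    (φ : ℕ → ℝ → ℝ)
    (hφ_mem : ∀ j, MemLp (φ j) 2 (volume.restrict (Set.Icc t T)))
    (hφ_on : ∀ i j, (∫ x in Set.Icc t T, φ i x * φ j x) = if i = j then (1 : ℝ) else 0)
    (hφ_complete : ∀ f : ℝ → ℝ, MemLp f 2 (volume.restrict (Set.Icc t T)) →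
      (∀ j, (∫ x in Set.Icc t T, f x * φ j x) = 0) →
      f =ᵐ[volume.restrict (Set.Icc t T)] 0)
    (ψ₁ ψ₂ ψ₃ : ℝ → ℝ)
    (hψ₁ : ContinuousOn ψ₁ (Set.Icc t T)) (hψ₂ : ContinuousOn ψ₂ (Set.Icc t T))
    (hψ₃ : ContinuousOn ψ₃ (Set.Icc t T))
    (C : ℕ → ℕ → ℕ → ℝ)
    (hC : ∀ j₃ j₂ j₁, C j₃ j₂ j₁ =
      ∫ t₃ in t..T, ψ₃ t₃ * φ j₃ t₃ *
        ∫ t₂ in t..t₃, ψ₂ t₂ * φ j₂ t₂ *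
          ∫ t₁ in t..t₂, ψ₁ t₁ * φ j₁ t₁)
    (j₂ : ℕ) :
    Tendsto (fun p => ∑ j ∈ Finset.range (p + 1), C j j₂ j) atTop (nhds 0) := by
  have hIcc : Set.uIcc t T = Set.Icc t T := Set.uIcc_of_le htT.le
  have hL2 : ∀ ψ : ℝ → ℝ, ContinuousOn ψ (Set.Icc t T) →
      MemLp ψ 2 (volume.restrict (Set.Icc t T)) :=
    fun ψ hψ => hψ.memLp_restrict_of_isCompact isCompact_Icc 2
  have hint : ∀ ψ : ℝ → ℝ, ContinuousOn ψ (Set.Icc t T) → ∀ j,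
      IntegrableOn (fun x => ψ x * φ j x) (Set.Icc t T) :=
    fun ψ hψ j => (hL2 ψ hψ).integrable_mul (hφ_mem j)
  set a : ℕ → ℝ → ℝ := fun j u => ∫ x in t..u, ψ₁ x * φ j x
  set c : ℕ → ℝ → ℝ := fun j u => ∫ x in u..T, ψ₃ x * φ j x
  have ha : ∀ j, ContinuousOn (a j) (Set.Icc t T) := fun j =>
    hIcc ▸ intervalIntegral.continuousOn_primitive_interval (hIcc ▸ hint ψ₁ hψ₁ j)
  have hc : ∀ j, ContinuousOn (c j) (Set.Icc t T) := fun j =>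
    hIcc ▸ intervalIntegral.continuousOn_primitive_interval_left (hIcc ▸ hint ψ₃ hψ₃ j)
  have hCj : ∀ j, C j j₂ j = ∫ u in Set.Icc t T, ψ₂ u * φ j₂ u * (a j u * c j u) := fun j =>
    (hC j j₂ j).trans (integral_mul_primitive_mul_primitive htT.le (f₁ := fun x => ψ₁ x * φ j x)
      (f₂ := fun x => ψ₂ x * φ j₂ x) (hint ψ₁ hψ₁ j) (hint ψ₂ hψ₂ j₂) (hint ψ₃ hψ₃ j))
  have hsum := tendsto_sum_integral_mul_of_hasSum (L := 0) (s := fun j u => a j u * c j u)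
    (hint ψ₂ hψ₂ j₂) (fun j => ((ha j).mul (hc j)).aestronglyMeasurable measurableSet_Icc)
    (fun n => ae_restrict_of_forall_mem measurableSet_Icc fun u hu =>
      abs_sum_primitive_mul_tail_le hφ_mem hφ_on (hL2 ψ₁ hψ₁) (hL2 ψ₃ hψ₃) hu n)
    (ae_restrict_of_forall_mem measurableSet_Icc fun u hu =>
      hasSum_primitive_mul_tail hφ_mem hφ_on hφ_complete (hL2 ψ₁ hψ₁) (hL2 ψ₃ hψ₃) hu)
  simp_rw [hCj]
  simpa [Function.comp_def] using hsum.comp (tendsto_add_atTop_nat 1)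

/-- contraction identity (k = 3, r = 1, non-adjacent pair {1,3}): for each
fixed `j₂`, `lim_{p→∞} Σ_{j=0}^p C_{j j₂ j} = 0`. -/
theorem stmt5
    (t T : ℝ) (ht : 0 ≤ t) (htT : t < T)
    (φ : ℕ → ℝ → ℝ)
    (hφ_mem : ∀ j, MemLp (φ j) 2 (volume.restrict (Set.Icc t T)))
    (hφ_on : ∀ i j, (∫ x in Set.Icc t T, φ i x * φ j x) = if i = j then (1 : ℝ) else 0)
    (hφ_complete : ∀ f : ℝ → ℝ, MemLp f 2 (volume.restrict (Set.Icc t T)) →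
      (∀ j, (∫ x in Set.Icc t T, f x * φ j x) = 0) →
      f =ᵐ[volume.restrict (Set.Icc t T)] 0)
    (ψ₁ ψ₂ ψ₃ : ℝ → ℝ)
    (hψ₁ : ContinuousOn ψ₁ (Set.Icc t T)) (hψ₂ : ContinuousOn ψ₂ (Set.Icc t T))
    (hψ₃ : ContinuousOn ψ₃ (Set.Icc t T))
    (C : ℕ → ℕ → ℕ → ℝ)
    (hC : ∀ j₃ j₂ j₁, C j₃ j₂ j₁ =
      ∫ t₃ in t..T, ψ₃ t₃ * φ j₃ t₃ *
        ∫ t₂ in t..t₃, ψ₂ t₂ * φ j₂ t₂ *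
          ∫ t₁ in t..t₂, ψ₁ t₁ * φ j₁ t₁)
    (j₂ : ℕ) :
    Tendsto (fun p => ∑ j ∈ Finset.range (p + 1), C j j₂ j) atTop (nhds 0) :=
  stmt5_general t T htT φ hφ_mem hφ_on hφ_complete ψ₁ ψ₂ ψ₃ hψ₁ hψ₂ hψ₃ C hC j₂
end

section
/- Let 0 ≤ t < T, let {φ_j}_{j=0}^∞ be an arbitrary complete orthonormal system of L²([t,T],ℝ), and let ψ_i(τ) = (τ − t)^{l_i} with l_i ∈ ℕ ∪ {0} for i = 1, 2, 3. Then lim_{p→∞} Σ_{j₃=0}^p ( Σ_{j₁=0}^p C_{j₃ j₁ j₁} − (1/2) ∫_t^T ψ₃(s)φ_{j₃}(s) (∫_t^s ψ₁(u)ψ₂(u) du) ds )² = 0, and lim_{p→∞} Σ_{j₁=0}^p ( Σ_{j=0}^p C_{j j j₁} − (1/2) ∫_t^T ψ₃(s)ψ₂(s) (∫_t^s ψ₁(u)φ_{j₁}(u) du) ds )² = 0. -/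
/-!
Write `Sₚ(f, g; c, d) = ∑_{j<p} ∫_c^d f(y) φ_j(y) ∫_c^y g(x) φ_j(x) dx dy`. Exchanging the order of
integration gives `Sₚ(f, g) + Sₚ(g, f) = ∑_{j<p} ⟨f 1_{[c,d]}, φ_j⟩ ⟨g 1_{[c,d]}, φ_j⟩`, which tends
to `∫_c^d f g` by Parseval. For `f ∈ C¹`, moving `f` from the outer to the inner variable changes
`Sₚ` by `∫_c^d f'(r) ∑_{j<p} ⟨g 1_{[c,r]}, φ_j⟩ ⟨1_{[r,d]}, φ_j⟩ dr`; the integrand is bounded by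
Bessel and Cauchy–Schwarz and tends to `0` by Parseval, since the two functions have disjoint
supports, so this change tends to `0` by dominated convergence. Applying this to `Sₚ(f, g)` and to
`Sₚ(1, f g)` yields `Sₚ(f, g) → ½ ∫_c^d f g`, with bounds uniform in `p, c, d`.

After a Fubini step, both sums in the theorem have the form `∑_{j<p} ⟨hₚ, φ_j⟩²` with
`hₚ = ψ₃ (Sₚ(ψ₂, ψ₁; t, ·) - ½ ∫_t^· ψ₁ ψ₂)`, resp. `hₚ = ψ₁ (Sₚ(ψ₃, ψ₂; ·, T) - ½ ∫_·^T ψ₂ ψ₃)`.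
By Bessel they are at most `‖hₚ‖²`, which tends to `0` by dominated convergence.
-/

open MeasureTheory Filter Finset Topology

/-- Fubini on the triangle `c ≤ x ≤ y ≤ d`. -/
theorem integral_mul_integral_swap {f g : ℝ → ℝ} {c d : ℝ} (hcd : c ≤ d)
    (hf : IntervalIntegrable f volume c d) (hg : IntervalIntegrable g volume c d) :
    ∫ y in c..d, g y * ∫ x in c..y, f x = ∫ x in c..d, f x * ∫ y in x..d, g y := by
  set ν := volume.restrict (Set.Ioc c d)
  set F : ℝ × ℝ → ℝ := {p : ℝ × ℝ | p.1 ≤ p.2}.indicator fun p => f p.1 * g p.2 with hF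
  have hint : Integrable F (ν.prod ν) :=
    (hf.1.mul_prod hg.1).indicator (measurableSet_le measurable_fst measurable_snd)
  have h_left : ∫ x, (∫ y, F (x, y) ∂ν) ∂ν = ∫ x in c..d, f x * ∫ y in x..d, g y := by
    rw [intervalIntegral.integral_of_le hcd]
    refine setIntegral_congr_fun measurableSet_Ioc fun x hx => ?_
    have hF_x : (fun y => F (x, y)) = (Set.Ici x).indicator fun y => f x * g y := by
      ext y; by_cases h : x ≤ y <;> simp [hF, h]
    have hs : Set.Ici x ∩ Set.Ioc c d = Set.Icc x d := by
      ext z; simp only [Set.mem_inter_iff, Set.mem_Ici, Set.mem_Ioc, Set.mem_Icc]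
      constructor
      · rintro ⟨hxz, -, hzd⟩; exact ⟨hxz, hzd⟩
      · rintro ⟨hxz, hzd⟩; exact ⟨hxz, hx.1.trans_le hxz, hzd⟩
    rw [hF_x, integral_indicator measurableSet_Ici, Measure.restrict_restrict measurableSet_Ici,
      hs, integral_Icc_eq_integral_Ioc, integral_const_mul,
      ← intervalIntegral.integral_of_le hx.2]
  have h_right : ∫ y, (∫ x, F (x, y) ∂ν) ∂ν = ∫ y in c..d, g y * ∫ x in c..y, f x := by
    rw [intervalIntegral.integral_of_le hcd]
    refine setIntegral_congr_fun measurableSet_Ioc fun y hy => ?_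
    have hF_y : (fun x => F (x, y)) = (Set.Iic y).indicator fun x => f x * g y := by
      ext x; by_cases h : x ≤ y <;> simp [hF, h]
    have hs : Set.Iic y ∩ Set.Ioc c d = Set.Ioc c y := by
      ext z; simp only [Set.mem_inter_iff, Set.mem_Iic, Set.mem_Ioc]
      constructor
      · rintro ⟨hzy, hcz, -⟩; exact ⟨hcz, hzy⟩
      · rintro ⟨hcz, hzy⟩; exact ⟨hzy, hcz, hzy.trans hy.2⟩
    rw [hF_y, integral_indicator measurableSet_Iic, Measure.restrict_restrict measurableSet_Iic,
      hs, integral_mul_const, ← intervalIntegral.integral_of_le hy.1.le, mul_comm]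
  rw [← h_right, ← integral_integral_swap (f := fun x y => F (x, y)) hint, h_left]

theorem MeasureTheory.LocallyIntegrable.intervalIntegrable {e : ℝ → ℝ}
    (he : LocallyIntegrable e) (a b : ℝ) : IntervalIntegrable e volume a b :=
  (he.integrableOn_isCompact isCompact_uIcc).intervalIntegrable

theorem MeasureTheory.LocallyIntegrable.intervalIntegrable_mul {e f : ℝ → ℝ}
    (he : LocallyIntegrable e) (hf : Continuous f) (a b : ℝ) :
    IntervalIntegrable (fun x => f x * e x) volume a b :=
  (he.intervalIntegrable a b).continuousOn_mul hf.continuousOn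

theorem continuous_intervalIntegral_left {u : ℝ → ℝ}
    (hu : ∀ a b, IntervalIntegrable u volume a b) (d : ℝ) :
    Continuous fun x => ∫ y in x..d, u y :=
  (intervalIntegral.continuous_primitive hu d).neg.congr fun x =>
    (intervalIntegral.integral_symm d x).symm

/-- For `e = φ_j` this is the Fourier coefficient `C_{jj}` of the kernel
`f(t₂) g(t₁) 1_{t₁ < t₂}` on `[c, d]`. -/
noncomputable def iteratedIntegral (e f g : ℝ → ℝ) (c d : ℝ) : ℝ :=
  ∫ y in c..d, f y * e y * ∫ x in c..y, g x * e x

noncomputable def weightShift (e f g : ℝ → ℝ) (c d : ℝ) : ℝ :=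
  iteratedIntegral e f g c d - iteratedIntegral e 1 (f * g) c d

section IteratedIntegral

variable {e f g : ℝ → ℝ}

theorem iteratedIntegral_add_swap (he : LocallyIntegrable e) (hf : Continuous f)
    (hg : Continuous g) {c d : ℝ} (hcd : c ≤ d) :
    iteratedIntegral e f g c d + iteratedIntegral e g f c d =
      (∫ x in c..d, f x * e x) * ∫ x in c..d, g x * e x := by
  have hfe := he.intervalIntegrable_mul hf
  have hge := he.intervalIntegrable_mul hg
  rw [iteratedIntegral, integral_mul_integral_swap hcd (hge c d) (hfe c d), iteratedIntegral,
    ← intervalIntegral.integral_add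
      ((hge c d).mul_continuousOn (continuous_intervalIntegral_left hfe d).continuousOn)
      ((hge c d).mul_continuousOn (intervalIntegral.continuous_primitive hfe c).continuousOn),
    mul_comm (∫ x in c..d, f x * e x), ← intervalIntegral.integral_mul_const]
  refine intervalIntegral.integral_congr fun y _ => ?_
  rw [← intervalIntegral.integral_add_adjacent_intervals (hfe c y) (hfe y d)]
  ring

theorem iteratedIntegral_eq_sub (he : LocallyIntegrable e) (hf : Continuous f)
    (hg : Continuous g) (a c d : ℝ) :
    iteratedIntegral e f g c d =
      (∫ y in c..d, f y * e y * ∫ x in a..y, g x * e x) -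
        (∫ x in a..c, g x * e x) * ∫ y in c..d, f y * e y := by
  have hfe := he.intervalIntegrable_mul hf
  have hge := he.intervalIntegrable_mul hg
  rw [iteratedIntegral, ← intervalIntegral.integral_const_mul, ← intervalIntegral.integral_sub
    ((hfe c d).mul_continuousOn (intervalIntegral.continuous_primitive hge a).continuousOn)
    ((hfe c d).const_mul _)]
  refine intervalIntegral.integral_congr fun y _ => ?_
  rw [← intervalIntegral.integral_add_adjacent_intervals (hge a c) (hge c y)]
  ring

theorem continuous_iteratedIntegral_right (he : LocallyIntegrable e) (hf : Continuous f)
    (hg : Continuous g) (c : ℝ) : Continuous fun d => iteratedIntegral e f g c d :=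
  intervalIntegral.continuous_primitive (fun a b =>
    (he.intervalIntegrable_mul hf a b).mul_continuousOn
      (intervalIntegral.continuous_primitive (he.intervalIntegrable_mul hg) c).continuousOn) c

theorem continuous_iteratedIntegral_left (he : LocallyIntegrable e) (hf : Continuous f)
    (hg : Continuous g) (d : ℝ) : Continuous fun c => iteratedIntegral e f g c d := by
  have hfe := he.intervalIntegrable_mul hf
  have hge := he.intervalIntegrable_mul hg
  simp_rw [iteratedIntegral_eq_sub he hf hg 0]
  exact (continuous_intervalIntegral_left (fun a b => (hfe a b).mul_continuousOn
    (intervalIntegral.continuous_primitive hge 0).continuousOn) d).sub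
    ((intervalIntegral.continuous_primitive hge 0).mul (continuous_intervalIntegral_left hfe d))

theorem continuous_integral_mul_integral (he : LocallyIntegrable e) (hg : Continuous g)
    (c d : ℝ) : Continuous fun r => (∫ x in c..r, g x * e x) * ∫ y in r..d, e y :=
  (intervalIntegral.continuous_primitive (he.intervalIntegrable_mul hg) c).mul
    (continuous_intervalIntegral_left he.intervalIntegrable d)

theorem weightShift_eq_integral (he : LocallyIntegrable e) (hf : ContDiff ℝ 1 f)
    (hg : Continuous g) {c d : ℝ} (hcd : c ≤ d) :
    weightShift e f g c d =
      ∫ r in c..d, deriv f r * ((∫ x in c..r, g x * e x) * ∫ y in r..d, e y) := by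
  have hf' : Continuous (deriv f) := hf.continuous_deriv le_rfl
  have hge := he.intervalIntegrable_mul hg
  have hG : Continuous fun r => ∫ x in c..r, g x * e x :=
    intervalIntegral.continuous_primitive hge c
  -- `f y - f x = ∫_x^y f'`, then Fubini on the triangle `x ≤ r ≤ y`
  have h_inner : ∀ y, c ≤ y → ∫ x in c..y, (f y - f x) * (g x * e x) =
      ∫ r in c..y, deriv f r * ∫ x in c..r, g x * e x := by
    intro y hcy
    rw [integral_mul_integral_swap hcy (hge c y) (hf'.intervalIntegrable c y)]
    refine intervalIntegral.integral_congr fun x _ => ?_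
    rw [intervalIntegral.integral_deriv_eq_sub (fun z _ => hf.differentiable one_ne_zero z)
      (hf'.intervalIntegrable x y)]
    ring
  calc weightShift e f g c d
      = ∫ y in c..d, e y * ∫ r in c..y, deriv f r * ∫ x in c..r, g x * e x := by
        rw [weightShift, iteratedIntegral, iteratedIntegral, ← intervalIntegral.integral_sub
          ((he.intervalIntegrable_mul hf.continuous c d).mul_continuousOn hG.continuousOn)
          ((he.intervalIntegrable_mul continuous_one c d).mul_continuousOn
            (intervalIntegral.continuous_primitive
              (he.intervalIntegrable_mul (hf.continuous.mul hg)) c).continuousOn)]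
        refine intervalIntegral.integral_congr fun y hy => ?_
        rw [← h_inner y (Set.uIcc_of_le hcd ▸ hy).1]
        simp only [Pi.one_apply, Pi.mul_apply, sub_mul, mul_assoc]
        rw [intervalIntegral.integral_sub ((hge c y).const_mul _)
          ((hge c y).continuousOn_mul hf.continuous.continuousOn),
          intervalIntegral.integral_const_mul]
        ring
    _ = ∫ r in c..d, deriv f r * ((∫ x in c..r, g x * e x) * ∫ y in r..d, e y) := by
        simp_rw [← mul_assoc]
        exact integral_mul_integral_swap hcd ((hf'.mul hG).intervalIntegrable c d)
          (he.intervalIntegrable c d)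

theorem iteratedIntegral_eq_weightShift_add (he : LocallyIntegrable e) (hf : Continuous f)
    (hg : Continuous g) {c d : ℝ} (hcd : c ≤ d) :
    iteratedIntegral e f g c d = weightShift e f g c d +
      ((∫ x in c..d, e x) * (∫ x in c..d, f x * g x * e x) - weightShift e (f * g) 1 c d) / 2 := by
  have h := iteratedIntegral_add_swap he continuous_one (hf.mul hg) hcd
  simp only [Pi.one_apply, one_mul, Pi.mul_apply] at h
  rw [weightShift, weightShift, mul_one, ← h]
  ring

theorem integral_mul_iteratedIntegral_swap {u : ℝ → ℝ} (he : LocallyIntegrable e)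
    (hf : Continuous f) (hg : Continuous g) (hu : ∀ a b, IntervalIntegrable u volume a b)
    {c d : ℝ} (hcd : c ≤ d) :
    ∫ s in c..d, f s * e s * ∫ v in c..s, g v * e v * ∫ x in c..v, u x =
      ∫ x in c..d, u x * iteratedIntegral e f g x d := by
  have hfe := he.intervalIntegrable_mul hf
  have hge := he.intervalIntegrable_mul hg
  set B : ℝ → ℝ := fun y => ∫ x in c..y, g x * e x
  set U : ℝ → ℝ := fun y => ∫ x in c..y, u x
  have hB : Continuous B := intervalIntegral.continuous_primitive hge c
  have hU : Continuous U := intervalIntegral.continuous_primitive hu c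
  have huB : ∀ a b, IntervalIntegrable (fun x => u x * B x) volume a b := fun a b =>
    (hu a b).mul_continuousOn hB.continuousOn
  have hfeB : ∀ a b, IntervalIntegrable (fun y => f y * e y * B y) volume a b := fun a b =>
    (hfe a b).mul_continuousOn hB.continuousOn
  have h_inner : ∀ s, c ≤ s →
      ∫ v in c..s, g v * e v * U v = B s * U s - ∫ x in c..s, u x * B x := by
    intro s hcs
    have h_split : ∀ x, u x * ∫ v in x..s, g v * e v = u x * B s - u x * B x := fun x => by
      rw [← mul_sub, intervalIntegral.integral_interval_sub_left (hge c s) (hge c x)]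
    rw [integral_mul_integral_swap hcs (hu c s) (hge c s), funext h_split,
      intervalIntegral.integral_sub ((hu c s).mul_const _) (huB c s),
      intervalIntegral.integral_mul_const, mul_comm]
  calc ∫ s in c..d, f s * e s * ∫ v in c..s, g v * e v * ∫ x in c..v, u x
      = (∫ s in c..d, f s * e s * B s * U s) -
          ∫ s in c..d, f s * e s * ∫ x in c..s, u x * B x := by
        rw [← intervalIntegral.integral_sub ((hfeB c d).mul_continuousOn hU.continuousOn)
          ((hfe c d).mul_continuousOn (intervalIntegral.continuous_primitive huB c).continuousOn)]
        refine intervalIntegral.integral_congr fun s hs => ?_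
        rw [h_inner s (Set.uIcc_of_le hcd ▸ hs).1]
        ring
    _ = (∫ x in c..d, u x * ∫ y in x..d, f y * e y * B y) -
          ∫ x in c..d, u x * B x * ∫ y in x..d, f y * e y := by
        rw [integral_mul_integral_swap hcd (hu c d) (hfeB c d),
          integral_mul_integral_swap hcd (huB c d) (hfe c d)]
    _ = ∫ x in c..d, u x * iteratedIntegral e f g x d := by
        rw [← intervalIntegral.integral_sub ((hu c d).mul_continuousOn
          (continuous_intervalIntegral_left hfeB d).continuousOn)
          ((huB c d).mul_continuousOn (continuous_intervalIntegral_left hfe d).continuousOn)]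
        refine intervalIntegral.integral_congr fun x _ => ?_
        rw [iteratedIntegral_eq_sub he hf hg c x d]
        ring

end IteratedIntegral

section Orthonormal

variable {α : Type*} [MeasurableSpace α] {μ : Measure α} {φ : ℕ → α → ℝ} {f g : α → ℝ}

theorem MeasureTheory.MemLp.inner_toLp_eq_integral (hf : MemLp f 2 μ) (hg : MemLp g 2 μ) :
    inner ℝ (hf.toLp f) (hg.toLp g) = ∫ x, f x * g x ∂μ := by
  rw [L2.inner_def]
  refine integral_congr_ae ?_
  filter_upwards [hf.coeFn_toLp, hg.coeFn_toLp] with x hfx hgx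
  rw [hfx, hgx, real_inner_eq_re_inner, RCLike.inner_apply, conj_trivial, mul_comm]
  rfl

variable (hφ_mem : ∀ j, MemLp (φ j) 2 μ)
  (hφ_on : ∀ i j, ∫ x, φ i x * φ j x ∂μ = if i = j then 1 else 0)

include hφ_on in
theorem orthonormal_toLp_s8 : Orthonormal ℝ fun j => (hφ_mem j).toLp (φ j) := by
  rw [orthonormal_iff_ite]
  intro i j
  rw [MemLp.inner_toLp_eq_integral, hφ_on]

include hφ_mem hφ_on in
theorem sum_sq_integral_mul_le (hf : MemLp f 2 μ) (s : Finset ℕ) :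
    ∑ j ∈ s, (∫ x, f x * φ j x ∂μ) ^ 2 ≤ ∫ x, f x ^ 2 ∂μ := by
  have h := (orthonormal_toLp_s8 hφ_mem hφ_on).sum_inner_products_le (hf.toLp f) (s := s)
  simp only [MemLp.inner_toLp_eq_integral, Real.norm_eq_abs, sq_abs,
    ← real_inner_self_eq_norm_sq] at h
  simpa only [mul_comm (φ _ _), sq] using h

include hφ_mem hφ_on in
theorem abs_sum_integral_mul_mul_le (hf : MemLp f 2 μ) (hg : MemLp g 2 μ) (s : Finset ℕ) :
    |∑ j ∈ s, (∫ x, f x * φ j x ∂μ) * ∫ x, g x * φ j x ∂μ| ≤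
      √(∫ x, f x ^ 2 ∂μ) * √(∫ x, g x ^ 2 ∂μ) := by
  rw [← Real.sqrt_mul (integral_nonneg fun x => sq_nonneg (f x))]
  refine Real.abs_le_sqrt ((sum_mul_sq_le_sq_mul_sq _ _ _).trans ?_)
  exact mul_le_mul (sum_sq_integral_mul_le hφ_mem hφ_on hf s)
    (sum_sq_integral_mul_le hφ_mem hφ_on hg s) (sum_nonneg fun j _ => sq_nonneg _)
    (integral_nonneg fun x => sq_nonneg (f x))

variable (hφ_complete : ∀ f, MemLp f 2 μ → (∀ j, ∫ x, f x * φ j x ∂μ = 0) → f =ᵐ[μ] 0)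

include hφ_on hφ_complete in
theorem exists_hilbertBasis_toLp :
    ∃ b : HilbertBasis ℕ ℝ (Lp ℝ 2 μ), ⇑b = fun j => (hφ_mem j).toLp (φ j) := by
  have hon := orthonormal_toLp_s8 hφ_mem hφ_on
  have hsp : (Submodule.span ℝ (Set.range fun j => (hφ_mem j).toLp (φ j)))ᗮ = ⊥ := by
    refine (Submodule.eq_bot_iff _).2 fun u hu => ?_
    have hu_mem : MemLp u 2 μ := Lp.memLp u
    refine Lp.ext ((hφ_complete u hu_mem fun j => ?_).trans (Lp.coeFn_zero ℝ 2 μ).symm)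
    have h := (Submodule.mem_orthogonal _ u).1 hu _ (Submodule.subset_span ⟨j, rfl⟩)
    rw [← Lp.toLp_coeFn u hu_mem, MemLp.inner_toLp_eq_integral] at h
    simpa only [mul_comm] using h
  exact ⟨HilbertBasis.mkOfOrthogonalEqBot hon hsp, HilbertBasis.coe_mkOfOrthogonalEqBot hon hsp⟩

include hφ_mem hφ_on hφ_complete in
theorem hasSum_integral_mul_mul (hf : MemLp f 2 μ) (hg : MemLp g 2 μ) :
    HasSum (fun j => (∫ x, f x * φ j x ∂μ) * ∫ x, g x * φ j x ∂μ) (∫ x, f x * g x ∂μ) := by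
  obtain ⟨b, hb⟩ := exists_hilbertBasis_toLp hφ_mem hφ_on hφ_complete
  have h := b.hasSum_inner_mul_inner (hf.toLp f) (hg.toLp g)
  simp only [hb, MemLp.inner_toLp_eq_integral] at h
  simpa only [mul_comm (φ _ _)] using h

include hφ_mem hφ_on in
theorem tendsto_sum_sq_integral_mul_of_tendsto_zero [IsFiniteMeasure μ] {h : ℕ → α → ℝ}
    {C : ℝ} (s : ℕ → Finset ℕ) (hmeas : ∀ q, AEStronglyMeasurable (h q) μ)
    (hbound : ∀ q, ∀ᵐ x ∂μ, |h q x| ≤ C)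
    (hlim : ∀ᵐ x ∂μ, Tendsto (fun q => h q x) atTop (𝓝 0)) :
    Tendsto (fun q => ∑ j ∈ s q, (∫ x, h q x * φ j x ∂μ) ^ 2) atTop (𝓝 0) := by
  have h_norm : Tendsto (fun q => ∫ x, h q x ^ 2 ∂μ) atTop (𝓝 0) := by
    have := tendsto_integral_of_dominated_convergence (F := fun q x => h q x ^ 2) (f := 0)
      (fun _ => C ^ 2) (fun q => (hmeas q).pow 2) (integrable_const _) (fun q => ?_) ?_
    · simpa using this
    · filter_upwards [hbound q] with x hx
      rw [Real.norm_eq_abs, abs_pow]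
      exact pow_le_pow_left₀ (abs_nonneg _) hx 2
    · filter_upwards [hlim] with x hx
      simpa using hx.pow 2
  refine squeeze_zero (fun q => sum_nonneg fun j _ => sq_nonneg _) (fun q => ?_) h_norm
  exact sum_sq_integral_mul_le hφ_mem hφ_on
    (MemLp.of_bound (hmeas q) C (by simpa using hbound q)) _

end Orthonormal

/-- Extended by zero, `φ j` is integrable on all of `ℝ`, so the primitives of `u * Φ t T φ j`
are continuous everywhere. -/
noncomputable def Φ (t T : ℝ) (φ : ℕ → ℝ → ℝ) (j : ℕ) : ℝ → ℝ :=
  (Set.Icc t T).indicator (φ j)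

theorem Continuous.memLp_restrict_Icc {u : ℝ → ℝ} (hu : Continuous u) (p : ENNReal)
    (a b : ℝ) : MemLp u p (volume.restrict (Set.Icc a b)) := by
  obtain ⟨C, hC⟩ := isCompact_Icc.exists_bound_of_continuousOn hu.continuousOn
  exact MemLp.of_bound hu.aestronglyMeasurable C
    ((ae_restrict_iff' measurableSet_Icc).2 (Eventually.of_forall hC))

section OnIcc

variable {t T c d : ℝ} {φ : ℕ → ℝ → ℝ} {u v f g ψ₁ ψ₂ ψ₃ : ℝ → ℝ}
  (hφ_mem : ∀ j, MemLp (φ j) 2 (volume.restrict (Set.Icc t T)))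
  (hφ_on : ∀ i j, (∫ x in Set.Icc t T, φ i x * φ j x) = if i = j then (1 : ℝ) else 0)
  (hφ_complete : ∀ f : ℝ → ℝ, MemLp f 2 (volume.restrict (Set.Icc t T)) →
    (∀ j, (∫ x in Set.Icc t T, f x * φ j x) = 0) → f =ᵐ[volume.restrict (Set.Icc t T)] 0)

theorem Φ_of_mem {x : ℝ} (hx : x ∈ Set.Icc t T) (j : ℕ) : Φ t T φ j x = φ j x :=
  Set.indicator_of_mem hx _

theorem integral_mul_Φ (hc : t ≤ c) (hcd : c ≤ d) (hd : d ≤ T) (j : ℕ) :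
    ∫ x in c..d, u x * Φ t T φ j x = ∫ x in c..d, u x * φ j x := by
  refine intervalIntegral.integral_congr fun x hx => ?_
  rw [Set.uIcc_of_le hcd] at hx
  rw [Φ_of_mem ⟨hc.trans hx.1, hx.2.trans hd⟩]

theorem integral_mul_integral_mul_Φ (hc : t ≤ c) (hcd : c ≤ d) (hd : d ≤ T) (i k : ℕ) :
    ∫ y in c..d, f y * φ i y * ∫ x in c..y, g x * φ k x =
      ∫ y in c..d, f y * Φ t T φ i y * ∫ x in c..y, g x * Φ t T φ k x := by
  refine intervalIntegral.integral_congr fun y hy => ?_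
  rw [Set.uIcc_of_le hcd] at hy
  rw [Φ_of_mem ⟨hc.trans hy.1, hy.2.trans hd⟩, integral_mul_Φ hc hy.1 (hy.2.trans hd)]

theorem setIntegral_Icc_indicator (hc : t ≤ c) (hcd : c ≤ d) (hd : d ≤ T) :
    ∫ x in Set.Icc t T, (Set.Icc c d).indicator u x = ∫ x in c..d, u x := by
  rw [integral_indicator measurableSet_Icc, Measure.restrict_restrict measurableSet_Icc,
    Set.inter_eq_left.2 (Set.Icc_subset_Icc hc hd), integral_Icc_eq_integral_Ioc,
    intervalIntegral.integral_of_le hcd]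

theorem setIntegral_Icc_indicator_mul (hc : t ≤ c) (hcd : c ≤ d) (hd : d ≤ T) (j : ℕ) :
    ∫ x in Set.Icc t T, (Set.Icc c d).indicator u x * φ j x =
      ∫ x in c..d, u x * Φ t T φ j x := by
  simp_rw [← Set.indicator_mul_left]
  rw [setIntegral_Icc_indicator hc hcd hd, integral_mul_Φ hc hcd hd]

theorem setIntegral_Icc_indicator_sq_le (hu : Continuous u) (a b : ℝ) :
    ∫ x in Set.Icc t T, (Set.Icc a b).indicator u x ^ 2 ≤ ∫ x in Set.Icc t T, u x ^ 2 := by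
  refine integral_mono_of_nonneg (ae_of_all _ fun x => sq_nonneg _)
    (hu.memLp_restrict_Icc 2 t T).integrable_sq (ae_of_all _ fun x => ?_)
  dsimp only
  by_cases hx : x ∈ Set.Icc a b
  · rw [Set.indicator_of_mem hx]
  · rw [Set.indicator_of_notMem hx, zero_pow two_ne_zero]
    positivity

include hφ_mem in
theorem locallyIntegrable_Φ (j : ℕ) : LocallyIntegrable (Φ t T φ j) :=
  (IntegrableOn.integrable_indicator ((hφ_mem j).integrable one_le_two)
    measurableSet_Icc).locallyIntegrable

include hφ_mem in
theorem intervalIntegrable_mul_φ (hu : Continuous u) (htT : t ≤ T) (j : ℕ) :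
    IntervalIntegrable (fun x => u x * φ j x) volume t T := by
  have hφ_int : IntegrableOn (φ j) (Set.uIcc t T) := by
    rw [Set.uIcc_of_le htT]
    exact (hφ_mem j).integrable one_le_two
  exact hφ_int.intervalIntegrable.continuousOn_mul hu.continuousOn

include hφ_mem hφ_on in
theorem abs_sum_integral_mul_Φ_mul_le (hu : Continuous u) (hv : Continuous v) {a b : ℝ}
    (ha : t ≤ a) (hab : a ≤ b) (hb : b ≤ T) (hc : t ≤ c) (hcd : c ≤ d) (hd : d ≤ T)
    (s : Finset ℕ) :
    |∑ j ∈ s, (∫ x in a..b, u x * Φ t T φ j x) * ∫ x in c..d, v x * Φ t T φ j x| ≤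
      √(∫ x in Set.Icc t T, u x ^ 2) * √(∫ x in Set.Icc t T, v x ^ 2) := by
  simp only [← setIntegral_Icc_indicator_mul ha hab hb, ← setIntegral_Icc_indicator_mul hc hcd hd]
  refine (abs_sum_integral_mul_mul_le hφ_mem hφ_on
    ((hu.memLp_restrict_Icc 2 t T).indicator measurableSet_Icc)
    ((hv.memLp_restrict_Icc 2 t T).indicator measurableSet_Icc) s).trans ?_
  exact mul_le_mul (Real.sqrt_le_sqrt (setIntegral_Icc_indicator_sq_le hu a b))
    (Real.sqrt_le_sqrt (setIntegral_Icc_indicator_sq_le hv c d)) (Real.sqrt_nonneg _)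
    (Real.sqrt_nonneg _)

include hφ_mem hφ_on hφ_complete in
theorem tendsto_sum_integral_mul_Φ_mul (hu : Continuous u) (hv : Continuous v) {a b : ℝ}
    (ha : t ≤ a) (hab : a ≤ b) (hb : b ≤ T) (hc : t ≤ c) (hcd : c ≤ d) (hd : d ≤ T) :
    Tendsto (fun p => ∑ j ∈ range p,
        (∫ x in a..b, u x * Φ t T φ j x) * ∫ x in c..d, v x * Φ t T φ j x) atTop
      (𝓝 (∫ x in Set.Icc t T, (Set.Icc a b).indicator u x * (Set.Icc c d).indicator v x)) := by
  simp only [← setIntegral_Icc_indicator_mul ha hab hb, ← setIntegral_Icc_indicator_mul hc hcd hd]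
  exact (hasSum_integral_mul_mul hφ_mem hφ_on hφ_complete
    ((hu.memLp_restrict_Icc 2 t T).indicator measurableSet_Icc)
    ((hv.memLp_restrict_Icc 2 t T).indicator measurableSet_Icc)).tendsto_sum_nat

include hφ_mem hφ_on hφ_complete in
theorem tendsto_sum_integral_mul_Φ_mul_self (hu : Continuous u) (hv : Continuous v)
    (hc : t ≤ c) (hcd : c ≤ d) (hd : d ≤ T) :
    Tendsto (fun p => ∑ j ∈ range p,
        (∫ x in c..d, u x * Φ t T φ j x) * ∫ x in c..d, v x * Φ t T φ j x) atTop
      (𝓝 (∫ x in c..d, u x * v x)) := by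
  convert tendsto_sum_integral_mul_Φ_mul hφ_mem hφ_on hφ_complete hu hv hc hcd hd hc hcd hd
    using 2
  simp_rw [← Set.indicator_mul]
  exact (setIntegral_Icc_indicator hc hcd hd).symm

include hφ_mem hφ_on hφ_complete in
theorem tendsto_sum_integral_mul_Φ_mul_adjacent (hu : Continuous u) (hv : Continuous v)
    {r : ℝ} (hc : t ≤ c) (hcr : c ≤ r) (hrd : r ≤ d) (hd : d ≤ T) :
    Tendsto (fun p => ∑ j ∈ range p,
        (∫ x in c..r, u x * Φ t T φ j x) * ∫ x in r..d, v x * Φ t T φ j x) atTop (𝓝 0) := by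
  convert tendsto_sum_integral_mul_Φ_mul hφ_mem hφ_on hφ_complete hu hv hc hcr (hrd.trans hd)
    (hc.trans hcr) hrd hd using 2
  refine (integral_eq_zero_of_ae ?_).symm
  filter_upwards [ae_restrict_of_ae (volume.ae_ne r)] with x hxr
  rcases hxr.lt_or_gt with hx | hx
  · have hx' : x ∉ Set.Icc r d := fun h => hx.not_ge h.1
    simp [Set.indicator_of_notMem hx']
  · have hx' : x ∉ Set.Icc c r := fun h => hx.not_ge h.2
    simp [Set.indicator_of_notMem hx']

include hφ_mem in
theorem sum_weightShift_eq_integral (hf : ContDiff ℝ 1 f) (hg : Continuous g) (hcd : c ≤ d)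
    (s : Finset ℕ) :
    ∑ j ∈ s, weightShift (Φ t T φ j) f g c d = ∫ r in c..d, deriv f r *
      ∑ j ∈ s, (∫ x in c..r, g x * Φ t T φ j x) * ∫ y in r..d, Φ t T φ j y := by
  have hΦ := locallyIntegrable_Φ hφ_mem
  simp only [mul_sum]
  rw [intervalIntegral.integral_finsetSum fun j _ => ?_]
  · exact sum_congr rfl fun j _ => weightShift_eq_integral (hΦ j) hf hg hcd
  · exact ((hf.continuous_deriv le_rfl).mul
      (continuous_integral_mul_integral (hΦ j) hg c d)).intervalIntegrable c d

include hφ_mem hφ_on in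
theorem exists_bound_weightShift_integrand (hf : ContDiff ℝ 1 f) (hg : Continuous g) :
    ∃ C, ∀ (s : Finset ℕ) (c r d : ℝ), t ≤ c → c ≤ r → r ≤ d → d ≤ T →
      ‖deriv f r * ∑ j ∈ s, (∫ x in c..r, g x * Φ t T φ j x) * ∫ y in r..d, Φ t T φ j y‖
        ≤ C := by
  obtain ⟨B, hB⟩ := isCompact_Icc.exists_bound_of_continuousOn (s := Set.Icc t T)
    (hf.continuous_deriv le_rfl).continuousOn
  refine ⟨B * (√(∫ x in Set.Icc t T, g x ^ 2) * √(∫ x in Set.Icc t T, 1 ^ 2)),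
    fun s c r d hc hcr hrd hd => ?_⟩
  have hBr := hB r ⟨hc.trans hcr, hrd.trans hd⟩
  rw [norm_mul]
  refine mul_le_mul hBr ?_ (norm_nonneg _) ((norm_nonneg _).trans hBr)
  simpa only [one_mul, Real.norm_eq_abs] using abs_sum_integral_mul_Φ_mul_le hφ_mem hφ_on
    (v := fun _ => 1) hg continuous_const hc hcr (hrd.trans hd) (hc.trans hcr) hrd hd s

include hφ_mem hφ_on in
theorem exists_bound_sum_weightShift (hf : ContDiff ℝ 1 f) (hg : Continuous g) :
    ∃ M, ∀ p c d, t ≤ c → c ≤ d → d ≤ T →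
      |∑ j ∈ range p, weightShift (Φ t T φ j) f g c d| ≤ M := by
  obtain ⟨C, hC⟩ := exists_bound_weightShift_integrand hφ_mem hφ_on hf hg
  refine ⟨|C| * (T - t), fun p c d hc hcd hd => ?_⟩
  rw [sum_weightShift_eq_integral hφ_mem hf hg hcd, ← Real.norm_eq_abs]
  refine (intervalIntegral.norm_integral_le_of_norm_le_const (C := |C|) fun r hr => ?_).trans ?_
  · rw [Set.uIoc_of_le hcd] at hr
    exact (hC _ c r d hc hr.1.le hr.2 hd).trans (le_abs_self C)
  · rw [abs_of_nonneg (sub_nonneg.2 hcd)]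
    exact mul_le_mul_of_nonneg_left (by linarith) (abs_nonneg C)

include hφ_mem hφ_on hφ_complete in
theorem tendsto_sum_weightShift (hf : ContDiff ℝ 1 f) (hg : Continuous g) (hc : t ≤ c)
    (hcd : c ≤ d) (hd : d ≤ T) :
    Tendsto (fun p => ∑ j ∈ range p, weightShift (Φ t T φ j) f g c d) atTop (𝓝 0) := by
  obtain ⟨C, hC⟩ := exists_bound_weightShift_integrand hφ_mem hφ_on hf hg
  simp_rw [sum_weightShift_eq_integral hφ_mem hf hg hcd]
  rw [← intervalIntegral.integral_zero (a := c) (b := d) (μ := volume)]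
  refine intervalIntegral.tendsto_integral_filter_of_dominated_convergence (fun _ => C)
    (Eventually.of_forall fun p => ((hf.continuous_deriv le_rfl).mul
      (continuous_finsetSum _ fun j _ => continuous_integral_mul_integral
        (locallyIntegrable_Φ hφ_mem j) hg c d)).aestronglyMeasurable)
    (Eventually.of_forall fun p => ae_of_all _ fun r hr => ?_) intervalIntegrable_const
    (ae_of_all _ fun r hr => ?_)
  · rw [Set.uIoc_of_le hcd] at hr
    exact hC _ c r d hc hr.1.le hr.2 hd
  · rw [Set.uIoc_of_le hcd] at hr
    simpa only [one_mul, mul_zero] using (tendsto_sum_integral_mul_Φ_mul_adjacent hφ_mem hφ_on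
      hφ_complete (v := fun _ => 1) hg continuous_const hc hr.1.le hr.2 hd).const_mul (deriv f r)

include hφ_mem hφ_on hφ_complete in
theorem tendsto_sum_iteratedIntegral (hf : ContDiff ℝ 1 f) (hg : ContDiff ℝ 1 g) (hc : t ≤ c)
    (hcd : c ≤ d) (hd : d ≤ T) :
    Tendsto (fun p => ∑ j ∈ range p, iteratedIntegral (Φ t T φ j) f g c d) atTop
      (𝓝 ((1 / 2) * ∫ x in c..d, f x * g x)) := by
  simp_rw [iteratedIntegral_eq_weightShift_add (locallyIntegrable_Φ hφ_mem _) hf.continuous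
    hg.continuous hcd, sum_add_distrib, ← sum_div, sum_sub_distrib]
  have h_shift := tendsto_sum_weightShift hφ_mem hφ_on hφ_complete hf hg.continuous hc hcd hd
  have h_shift' := tendsto_sum_weightShift hφ_mem hφ_on hφ_complete (f := f * g) (hf.mul hg)
    continuous_one hc hcd hd
  have h_prod := tendsto_sum_integral_mul_Φ_mul_self hφ_mem hφ_on hφ_complete (u := fun _ => 1)
    continuous_const (hf.continuous.mul hg.continuous) hc hcd hd
  simp only [one_mul, Pi.mul_apply] at h_prod
  convert h_shift.add ((h_prod.sub h_shift').div_const 2) using 2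
  ring

include hφ_mem hφ_on in
theorem exists_bound_sum_iteratedIntegral (hf : ContDiff ℝ 1 f) (hg : ContDiff ℝ 1 g) :
    ∃ M, ∀ p c d, t ≤ c → c ≤ d → d ≤ T →
      |∑ j ∈ range p, iteratedIntegral (Φ t T φ j) f g c d| ≤ M := by
  obtain ⟨M₁, hM₁⟩ := exists_bound_sum_weightShift hφ_mem hφ_on hf hg.continuous
  obtain ⟨M₂, hM₂⟩ := exists_bound_sum_weightShift hφ_mem hφ_on (f := f * g) (hf.mul hg)
    continuous_one
  set K := √(∫ x in Set.Icc t T, 1 ^ 2) * √(∫ x in Set.Icc t T, (f x * g x) ^ 2)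
  refine ⟨M₁ + (K + M₂) / 2, fun p c d hc hcd hd => ?_⟩
  have h_prod := abs_sum_integral_mul_Φ_mul_le hφ_mem hφ_on (u := fun _ => 1) continuous_const
    (hf.continuous.mul hg.continuous) hc hcd hd hc hcd hd (range p)
  simp only [one_mul, Pi.mul_apply] at h_prod
  simp_rw [iteratedIntegral_eq_weightShift_add (locallyIntegrable_Φ hφ_mem _) hf.continuous
    hg.continuous hcd, sum_add_distrib, ← sum_div, sum_sub_distrib]
  have h₁ := abs_le.1 (hM₁ p c d hc hcd hd)
  have h₂ := abs_le.1 (hM₂ p c d hc hcd hd)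
  have h₃ := abs_le.1 h_prod
  exact abs_le.2 ⟨by linarith, by linarith⟩

include hφ_mem hφ_on in
theorem tendsto_sum_sq_integral_mul_sub_mul {w L : ℝ → ℝ} {F : ℕ → ℝ → ℝ} {M : ℝ}
    (hw : Continuous w) (hF : ∀ q, Continuous (F q)) (hL : Continuous L)
    (hFM : ∀ q, ∀ x ∈ Set.Icc t T, |F q x| ≤ M)
    (hlim : ∀ x ∈ Set.Icc t T, Tendsto (fun q => F q x) atTop (𝓝 (L x))) :
    Tendsto (fun q => ∑ j ∈ range q, (∫ x in Set.Icc t T, w x * (F q x - L x) * φ j x) ^ 2)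
      atTop (𝓝 0) := by
  obtain ⟨B, hB⟩ := isCompact_Icc.exists_bound_of_continuousOn (s := Set.Icc t T) hw.continuousOn
  have hLM : ∀ x ∈ Set.Icc t T, |L x| ≤ M := fun x hx =>
    le_of_tendsto' (hlim x hx).abs fun q => hFM q x hx
  refine tendsto_sum_sq_integral_mul_of_tendsto_zero hφ_mem hφ_on (C := B * (M + M)) _
    (fun q => (hw.mul ((hF q).sub hL)).aestronglyMeasurable)
    (fun q => ae_restrict_of_forall_mem measurableSet_Icc fun x hx => ?_)
    (ae_restrict_of_forall_mem measurableSet_Icc fun x hx => ?_)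
  · rw [abs_mul]
    exact mul_le_mul (hB x hx) ((abs_sub _ _).trans (add_le_add (hFM q x hx) (hLM x hx)))
      (abs_nonneg _) ((norm_nonneg _).trans (hB x hx))
  · simpa using ((hlim x hx).sub_const (L x)).const_mul (w x)

include hφ_mem in
theorem sum_coeff_diag_inner_sub_eq_integral (htT : t ≤ T) (hψ₁ : Continuous ψ₁)
    (hψ₂ : Continuous ψ₂) (hψ₃ : Continuous ψ₃) (q j₃ : ℕ) :
    (∑ j₁ ∈ range q, ∫ t₃ in t..T, ψ₃ t₃ * φ j₃ t₃ *
        ∫ t₂ in t..t₃, ψ₂ t₂ * φ j₁ t₂ * ∫ t₁ in t..t₂, ψ₁ t₁ * φ j₁ t₁) -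
      (1 / 2) * (∫ s in t..T, ψ₃ s * φ j₃ s * ∫ u in t..s, ψ₁ u * ψ₂ u) =
    ∫ x in Set.Icc t T, ψ₃ x * ((∑ j ∈ range q, iteratedIntegral (Φ t T φ j) ψ₂ ψ₁ t x) -
      (1 / 2) * ∫ u in t..x, ψ₂ u * ψ₁ u) * φ j₃ x := by
  have hI : ∀ j, Continuous fun s => iteratedIntegral (Φ t T φ j) ψ₂ ψ₁ t s := fun j =>
    continuous_iteratedIntegral_right (locallyIntegrable_Φ hφ_mem j) hψ₂ hψ₁ t
  have hG : Continuous fun s => ∫ u in t..s, ψ₂ u * ψ₁ u :=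
    intervalIntegral.continuous_primitive ((hψ₂.mul hψ₁).intervalIntegrable) t
  have h_iter : ∀ j₁, ∫ t₃ in t..T, ψ₃ t₃ * φ j₃ t₃ *
        ∫ t₂ in t..t₃, ψ₂ t₂ * φ j₁ t₂ * ∫ t₁ in t..t₂, ψ₁ t₁ * φ j₁ t₁ =
      ∫ s in t..T, ψ₃ s * φ j₃ s * iteratedIntegral (Φ t T φ j₁) ψ₂ ψ₁ t s := fun j₁ =>
    intervalIntegral.integral_congr fun s hs => by
      rw [Set.uIcc_of_le htT] at hs
      rw [integral_mul_integral_mul_Φ le_rfl hs.1 hs.2, iteratedIntegral]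
  simp_rw [h_iter, mul_comm (ψ₁ _) (ψ₂ _)]
  rw [integral_Icc_eq_integral_Ioc, ← intervalIntegral.integral_of_le htT,
    ← intervalIntegral.integral_finsetSum fun j₁ _ =>
      (intervalIntegrable_mul_φ hφ_mem hψ₃ htT j₃).mul_continuousOn (hI j₁).continuousOn,
    ← intervalIntegral.integral_const_mul, ← intervalIntegral.integral_sub ?_
      (((intervalIntegrable_mul_φ hφ_mem hψ₃ htT j₃).mul_continuousOn
        hG.continuousOn).const_mul _)]
  · refine intervalIntegral.integral_congr fun s _ => ?_
    simp only [← mul_sum]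
    ring
  · simpa only [mul_sum] using (intervalIntegrable_mul_φ hφ_mem hψ₃ htT j₃).mul_continuousOn
      (continuous_finsetSum (range q) fun j _ => hI j).continuousOn

include hφ_mem in
theorem coeff_diag_outer_eq_integral (htT : t ≤ T) (hψ₁ : Continuous ψ₁) (hψ₂ : Continuous ψ₂)
    (hψ₃ : Continuous ψ₃) (j j₁ : ℕ) :
    ∫ t₃ in t..T, ψ₃ t₃ * φ j t₃ *
        ∫ t₂ in t..t₃, ψ₂ t₂ * φ j t₂ * ∫ t₁ in t..t₂, ψ₁ t₁ * φ j₁ t₁ =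
      ∫ x in t..T, ψ₁ x * φ j₁ x * iteratedIntegral (Φ t T φ j) ψ₃ ψ₂ x T := by
  have hΦ := locallyIntegrable_Φ hφ_mem
  calc _ = ∫ s in t..T, ψ₃ s * Φ t T φ j s *
          ∫ v in t..s, ψ₂ v * Φ t T φ j v * ∫ x in t..v, ψ₁ x * Φ t T φ j₁ x :=
        intervalIntegral.integral_congr fun s hs => by
          rw [Set.uIcc_of_le htT] at hs
          rw [integral_mul_integral_mul_Φ le_rfl hs.1 hs.2, Φ_of_mem hs]
    _ = ∫ x in t..T, ψ₁ x * Φ t T φ j₁ x * iteratedIntegral (Φ t T φ j) ψ₃ ψ₂ x T :=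
        integral_mul_iteratedIntegral_swap (hΦ j) hψ₃ hψ₂ ((hΦ j₁).intervalIntegrable_mul hψ₁)
          htT
    _ = _ := intervalIntegral.integral_congr fun x hx => by
        rw [Set.uIcc_of_le htT] at hx
        rw [Φ_of_mem hx]

include hφ_mem in
theorem sum_coeff_diag_outer_sub_eq_integral (htT : t ≤ T) (hψ₁ : Continuous ψ₁)
    (hψ₂ : Continuous ψ₂) (hψ₃ : Continuous ψ₃) (q j₁ : ℕ) :
    (∑ j ∈ range q, ∫ t₃ in t..T, ψ₃ t₃ * φ j t₃ *
        ∫ t₂ in t..t₃, ψ₂ t₂ * φ j t₂ * ∫ t₁ in t..t₂, ψ₁ t₁ * φ j₁ t₁) -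
      (1 / 2) * (∫ s in t..T, ψ₃ s * ψ₂ s * ∫ u in t..s, ψ₁ u * φ j₁ u) =
    ∫ x in Set.Icc t T, ψ₁ x * ((∑ j ∈ range q, iteratedIntegral (Φ t T φ j) ψ₃ ψ₂ x T) -
      (1 / 2) * ∫ s in x..T, ψ₃ s * ψ₂ s) * φ j₁ x := by
  have hI : ∀ j, Continuous fun x => iteratedIntegral (Φ t T φ j) ψ₃ ψ₂ x T := fun j =>
    continuous_iteratedIntegral_left (locallyIntegrable_Φ hφ_mem j) hψ₃ hψ₂ T
  have hG : Continuous fun x => ∫ s in x..T, ψ₃ s * ψ₂ s :=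
    continuous_intervalIntegral_left ((hψ₃.mul hψ₂).intervalIntegrable) T
  rw [sum_congr rfl fun j _ => coeff_diag_outer_eq_integral hφ_mem htT hψ₁ hψ₂ hψ₃ j j₁,
    integral_mul_integral_swap (g := fun s => ψ₃ s * ψ₂ s) htT
      (intervalIntegrable_mul_φ hφ_mem hψ₁ htT j₁) ((hψ₃.mul hψ₂).intervalIntegrable t T),
    integral_Icc_eq_integral_Ioc, ← intervalIntegral.integral_of_le htT,
    ← intervalIntegral.integral_finsetSum fun j _ =>
      (intervalIntegrable_mul_φ hφ_mem hψ₁ htT j₁).mul_continuousOn (hI j).continuousOn,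
    ← intervalIntegral.integral_const_mul, ← intervalIntegral.integral_sub ?_
      (((intervalIntegrable_mul_φ hφ_mem hψ₁ htT j₁).mul_continuousOn
        hG.continuousOn).const_mul _)]
  · refine intervalIntegral.integral_congr fun x _ => ?_
    simp only [← mul_sum]
    ring
  · simpa only [mul_sum] using (intervalIntegrable_mul_φ hφ_mem hψ₁ htT j₁).mul_continuousOn
      (continuous_finsetSum (range q) fun j _ => hI j).continuousOn

include hφ_mem hφ_on hφ_complete in
theorem tendsto_sum_sq_coeff_diag_inner (htT : t ≤ T) (hψ₁ : ContDiff ℝ 1 ψ₁)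
    (hψ₂ : ContDiff ℝ 1 ψ₂) (hψ₃ : Continuous ψ₃) :
    Tendsto (fun q => ∑ j₃ ∈ range q,
        ((∑ j₁ ∈ range q, ∫ t₃ in t..T, ψ₃ t₃ * φ j₃ t₃ *
            ∫ t₂ in t..t₃, ψ₂ t₂ * φ j₁ t₂ * ∫ t₁ in t..t₂, ψ₁ t₁ * φ j₁ t₁) -
          (1 / 2) * ∫ s in t..T, ψ₃ s * φ j₃ s * ∫ u in t..s, ψ₁ u * ψ₂ u) ^ 2) atTop (𝓝 0) := by
  simp_rw [sum_coeff_diag_inner_sub_eq_integral hφ_mem htT hψ₁.continuous hψ₂.continuous hψ₃]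
  obtain ⟨M, hM⟩ := exists_bound_sum_iteratedIntegral hφ_mem hφ_on hψ₂ hψ₁
  exact tendsto_sum_sq_integral_mul_sub_mul hφ_mem hφ_on hψ₃
    (fun q => continuous_finsetSum _ fun j _ => continuous_iteratedIntegral_right
      (locallyIntegrable_Φ hφ_mem j) hψ₂.continuous hψ₁.continuous t)
    (continuous_const.mul (intervalIntegral.continuous_primitive
      (hψ₂.continuous.mul hψ₁.continuous).intervalIntegrable t))
    (fun q x hx => hM q t x le_rfl hx.1 hx.2)
    (fun x hx => tendsto_sum_iteratedIntegral hφ_mem hφ_on hφ_complete hψ₂ hψ₁ le_rfl hx.1 hx.2)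

include hφ_mem hφ_on hφ_complete in
theorem tendsto_sum_sq_coeff_diag_outer (htT : t ≤ T) (hψ₁ : Continuous ψ₁)
    (hψ₂ : ContDiff ℝ 1 ψ₂) (hψ₃ : ContDiff ℝ 1 ψ₃) :
    Tendsto (fun q => ∑ j₁ ∈ range q,
        ((∑ j ∈ range q, ∫ t₃ in t..T, ψ₃ t₃ * φ j t₃ *
            ∫ t₂ in t..t₃, ψ₂ t₂ * φ j t₂ * ∫ t₁ in t..t₂, ψ₁ t₁ * φ j₁ t₁) -
          (1 / 2) * ∫ s in t..T, ψ₃ s * ψ₂ s * ∫ u in t..s, ψ₁ u * φ j₁ u) ^ 2) atTop (𝓝 0) := by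
  simp_rw [sum_coeff_diag_outer_sub_eq_integral hφ_mem htT hψ₁ hψ₂.continuous hψ₃.continuous]
  obtain ⟨M, hM⟩ := exists_bound_sum_iteratedIntegral hφ_mem hφ_on hψ₃ hψ₂
  exact tendsto_sum_sq_integral_mul_sub_mul hφ_mem hφ_on hψ₁
    (fun q => continuous_finsetSum _ fun j _ => continuous_iteratedIntegral_left
      (locallyIntegrable_Φ hφ_mem j) hψ₃.continuous hψ₂.continuous T)
    (continuous_const.mul (continuous_intervalIntegral_left
      (hψ₃.continuous.mul hψ₂.continuous).intervalIntegrable T))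
    (fun q x hx => hM q x T hx.1 hx.2 le_rfl)
    (fun x hx => tendsto_sum_iteratedIntegral hφ_mem hφ_on hφ_complete hψ₃ hψ₂ hx.1 hx.2 le_rfl)

end OnIcc

theorem stmt8_general
    (t T : ℝ) (htT : t < T)
    (φ : ℕ → ℝ → ℝ)
    (hφ_mem : ∀ j, MemLp (φ j) 2 (volume.restrict (Set.Icc t T)))
    (hφ_on : ∀ i j, (∫ x in Set.Icc t T, φ i x * φ j x) = if i = j then (1 : ℝ) else 0)
    (hφ_complete : ∀ f : ℝ → ℝ, MemLp f 2 (volume.restrict (Set.Icc t T)) →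
      (∀ j, (∫ x in Set.Icc t T, f x * φ j x) = 0) →
      f =ᵐ[volume.restrict (Set.Icc t T)] 0)
    (l₁ l₂ l₃ : ℕ) (ψ₁ ψ₂ ψ₃ : ℝ → ℝ)
    (hψ₁ : ψ₁ = fun τ => (τ - t) ^ l₁)
    (hψ₂ : ψ₂ = fun τ => (τ - t) ^ l₂)
    (hψ₃ : ψ₃ = fun τ => (τ - t) ^ l₃)
    (C : ℕ → ℕ → ℕ → ℝ)
    (hC : ∀ j₃ j₂ j₁, C j₃ j₂ j₁ =
      ∫ t₃ in t..T, ψ₃ t₃ * φ j₃ t₃ *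
        ∫ t₂ in t..t₃, ψ₂ t₂ * φ j₂ t₂ *
          ∫ t₁ in t..t₂, ψ₁ t₁ * φ j₁ t₁) :
    Tendsto
      (fun p => ∑ j₃ ∈ Finset.range (p + 1),
        ((∑ j₁ ∈ Finset.range (p + 1), C j₃ j₁ j₁) -
          (1 / 2) * ∫ s in t..T, ψ₃ s * φ j₃ s * ∫ u in t..s, ψ₁ u * ψ₂ u) ^ 2)
      atTop (nhds 0) ∧
    Tendsto
      (fun p => ∑ j₁ ∈ Finset.range (p + 1),
        ((∑ j ∈ Finset.range (p + 1), C j j j₁) -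
          (1 / 2) * ∫ s in t..T, ψ₃ s * ψ₂ s * ∫ u in t..s, ψ₁ u * φ j₁ u) ^ 2)
      atTop (nhds 0) := by
  have hψ : ∀ l : ℕ, ContDiff ℝ 1 fun τ : ℝ => (τ - t) ^ l := fun l =>
    (contDiff_id.sub contDiff_const).pow l
  subst hψ₁ hψ₂ hψ₃
  simp only [hC]
  exact ⟨(tendsto_sum_sq_coeff_diag_inner hφ_mem hφ_on hφ_complete htT.le (hψ l₁) (hψ l₂)
      (hψ l₃).continuous).comp (tendsto_add_atTop_nat 1),
    (tendsto_sum_sq_coeff_diag_outer hφ_mem hφ_on hφ_complete htT.le (hψ l₁).continuous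
      (hψ l₂) (hψ l₃)).comp (tendsto_add_atTop_nat 1)⟩

/-- condition (july700000) for k = 3, r = 1, adjacent pairs {1,2} and {2,3},
for power weight functions `ψᵢ(τ) = (τ − t)^{lᵢ}` and an arbitrary CONS. -/
theorem stmt8
    (t T : ℝ) (ht : 0 ≤ t) (htT : t < T)
    (φ : ℕ → ℝ → ℝ)
    (hφ_mem : ∀ j, MemLp (φ j) 2 (volume.restrict (Set.Icc t T)))
    (hφ_on : ∀ i j, (∫ x in Set.Icc t T, φ i x * φ j x) = if i = j then (1 : ℝ) else 0)
    (hφ_complete : ∀ f : ℝ → ℝ, MemLp f 2 (volume.restrict (Set.Icc t T)) →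
      (∀ j, (∫ x in Set.Icc t T, f x * φ j x) = 0) →
      f =ᵐ[volume.restrict (Set.Icc t T)] 0)
    (l₁ l₂ l₃ : ℕ) (ψ₁ ψ₂ ψ₃ : ℝ → ℝ)
    (hψ₁ : ψ₁ = fun τ => (τ - t) ^ l₁)
    (hψ₂ : ψ₂ = fun τ => (τ - t) ^ l₂)
    (hψ₃ : ψ₃ = fun τ => (τ - t) ^ l₃)
    (C : ℕ → ℕ → ℕ → ℝ)
    (hC : ∀ j₃ j₂ j₁, C j₃ j₂ j₁ =
      ∫ t₃ in t..T, ψ₃ t₃ * φ j₃ t₃ *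
        ∫ t₂ in t..t₃, ψ₂ t₂ * φ j₂ t₂ *
          ∫ t₁ in t..t₂, ψ₁ t₁ * φ j₁ t₁) :
    Tendsto
      (fun p => ∑ j₃ ∈ Finset.range (p + 1),
        ((∑ j₁ ∈ Finset.range (p + 1), C j₃ j₁ j₁) -
          (1 / 2) * ∫ s in t..T, ψ₃ s * φ j₃ s * ∫ u in t..s, ψ₁ u * ψ₂ u) ^ 2)
      atTop (nhds 0) ∧
    Tendsto
      (fun p => ∑ j₁ ∈ Finset.range (p + 1),
        ((∑ j ∈ Finset.range (p + 1), C j j j₁) -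
          (1 / 2) * ∫ s in t..T, ψ₃ s * ψ₂ s * ∫ u in t..s, ψ₁ u * φ j₁ u) ^ 2)
      atTop (nhds 0) :=
  stmt8_general t T htT φ hφ_mem hφ_on hφ_complete l₁ l₂ l₃ ψ₁ ψ₂ ψ₃ hψ₁ hψ₂ hψ₃ C hC
end
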